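/- arXiv:2209.04984 — 11 statements merged into one kernel-verified Lean document; each statement's English description precedes it below -/
import Mathlib

section
/- Fix positive integers N_a, N_p and positive reals β, H_P, d_TA, d_AP, P_t, P_F, σ², σ_F². Let h̄, s̄ ∈ ℂ^{N_p} and s̃, ḡ ∈ ℂ^{N_a} be vectors all of whose entries have unit modulus, and let ψ₁, ψ₂, ψ₃ ∈ ℝ. Define the channels h = (√β/H_P)e^{-iψ₁} h̄ ∈ ℂ^{N_p}, S = (√β/d_AP)e^{-iψ₂} s̄ s̃^H ∈ ℂ^{N_p×N_a}, g = (√β/d_TA)e^{-iψ₃} ḡ ∈ ℂ^{N_a}. Let Θ_P ∈ ℂ^{N_p×N_p} and Θ_A ∈ ℂ^{N_a×N_a} be diagonal matrices with unit-modulus diagonal entries satisfying s̃^H Θ_A ḡ = N_a and h̄^H Θ_P s̄ = N_p, and set η = √(P_F d_TA² / (N_a(P_t β + d_TA² σ_F²))). Then the receive SNR |h^H Θ_P S η Θ_A g|² P_t / (‖h^H Θ_P S η Θ_A‖² σ_F² + σ²) equals P_t P_F β² N_a N_p² / (C₁ d_TA² + C₂ d_AP² + C₃ d_TA² d_AP²),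 where C₁ = σ_F² P_F β N_p², C₂ = σ² P_t H_P², C₃ = H_P² σ_F² σ²/β. -/
/-!
Since `S` is rank one, the cascaded row vector `hᴴ Θ_P S η Θ_A` is the scalar
`k = η c_S c̄_H (h̄ᴴ Θ_P s̄) = η c_S c̄_H N_p` times `s̃ᴴ Θ_A`, all of whose entries have modulus
`‖k‖`. So the amplified noise power is `N_a ‖k‖²`, the AIRS alignment makes the signal amplitude
`‖k‖ ‖c_G‖ N_a`, and the SNR becomes a rational function of `η²`, which the tight amplification
power constraint fixes.
-/

open Matrix in
theorem Matrix.vecMul_diagonal_mul_vecMulVec_mul_diagonal {m n R : Type*} [Fintype m] [Fintype n]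
    [DecidableEq m] [DecidableEq n] [CommSemiring R] (v θ a : m → R) (b φ : n → R) :
    v ᵥ* (diagonal θ * vecMulVec a b * diagonal φ) = (v ⬝ᵥ (θ * a)) • (b * φ) := by
  have hθ : v ᵥ* diagonal θ = v * θ := funext (vecMul_diagonal v θ)
  ext j
  rw [← vecMul_vecMul, ← vecMul_vecMul, hθ, vecMul_vecMulVec, vecMul_diagonal]
  simp only [Pi.smul_apply, Pi.mul_apply, smul_eq_mul, dotProduct, mul_assoc]

theorem Complex.norm_ofReal_mul_exp_neg_mul_I {x : ℝ} (hx : 0 ≤ x) (ψ : ℝ) :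
    ‖(x : ℂ) * exp (-(ψ * I))‖ = x := by
  rw [norm_mul, norm_real, Real.norm_of_nonneg hx, ← neg_mul, ← ofReal_neg,
    norm_exp_ofReal_mul_I, mul_one]

theorem tapr_snr_eq_of_eta_sq {Na Np β HP dTA dAP Pt PF σ2 σF2 η : ℝ} (hNa : 0 < Na)
    (hβ : 0 < β) (hHP : 0 < HP) (hdTA : 0 < dTA) (hdAP : 0 < dAP)
    (hPt : 0 < Pt) (hσF2 : 0 < σF2)
    (hη : η ^ 2 = PF * dTA ^ 2 / (Na * (Pt * β + dTA ^ 2 * σF2))) :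
    (η * (√β / dAP) * (√β / HP) * Np * (√β / dTA) * Na) ^ 2 * Pt /
        (Na * (η * (√β / dAP) * (√β / HP) * Np) ^ 2 * σF2 + σ2)
      = Pt * PF * β ^ 2 * Na * Np ^ 2 /
        ((σF2 * PF * β * Np ^ 2) * dTA ^ 2 + (σ2 * Pt * HP ^ 2) * dAP ^ 2 +
          (HP ^ 2 * σF2 * σ2 / β) * dTA ^ 2 * dAP ^ 2) := by
  simp only [mul_pow, div_pow, Real.sq_sqrt hβ.le, hη]
  field_simp
  ring

open Matrix in
theorem tapr_snr_closed_form_general (Na Np : ℕ) (hNa : 0 < Na)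
    (β HP dTA dAP Pt PF σ2 σF2 : ℝ)
    (hβ : 0 < β) (hHP : 0 < HP) (hdTA : 0 < dTA) (hdAP : 0 < dAP)
    (hPt : 0 < Pt) (hPF : 0 < PF) (hσF2 : 0 < σF2)
    (hbar sbar : Fin Np → ℂ) (stil gbar : Fin Na → ℂ)
    (hstil : ∀ j, Norm.norm (stil j) = 1)
    (ψ₁ ψ₂ ψ₃ : ℝ)
    (h : Fin Np → ℂ)
    (hh : h = fun i => ((Real.sqrt β / HP : ℝ) : ℂ) *
      Complex.exp (-((ψ₁ : ℝ) * Complex.I)) * hbar i)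
    (S : Matrix (Fin Np) (Fin Na) ℂ)
    (hS : S = fun i j => ((Real.sqrt β / dAP : ℝ) : ℂ) *
      Complex.exp (-((ψ₂ : ℝ) * Complex.I)) * (sbar i * (starRingEnd ℂ) (stil j)))
    (g : Fin Na → ℂ)
    (hg : g = fun j => ((Real.sqrt β / dTA : ℝ) : ℂ) *
      Complex.exp (-((ψ₃ : ℝ) * Complex.I)) * gbar j)
    (θP : Fin Np → ℂ) (θA : Fin Na → ℂ)
    (hθA : ∀ j, Norm.norm (θA j) = 1)
    (halignA : ∑ j, (starRingEnd ℂ) (stil j) * θA j * gbar j = (Na : ℂ))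
    (halignP : ∑ i, (starRingEnd ℂ) (hbar i) * θP i * sbar i = (Np : ℂ))
    (η : ℝ)
    (hη : η = Real.sqrt (PF * dTA ^ 2 / ((Na : ℝ) * (Pt * β + dTA ^ 2 * σF2)))) :
    (Norm.norm (dotProduct
        (Matrix.vecMul (star h)
          (Matrix.diagonal θP * S * ((η : ℂ) • Matrix.diagonal θA))) g)) ^ 2 * Pt /
      ((∑ j, (Norm.norm ((Matrix.vecMul (star h)
          (Matrix.diagonal θP * S * ((η : ℂ) • Matrix.diagonal θA))) j)) ^ 2) * σF2 + σ2)
    = Pt * PF * β ^ 2 * (Na : ℝ) * (Np : ℝ) ^ 2 /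
        ((σF2 * PF * β * (Np : ℝ) ^ 2) * dTA ^ 2 + (σ2 * Pt * HP ^ 2) * dAP ^ 2 +
          (HP ^ 2 * σF2 * σ2 / β) * dTA ^ 2 * dAP ^ 2) := by
  set cH : ℂ := ((√β / HP : ℝ) : ℂ) * Complex.exp (-(ψ₁ * Complex.I))
  set cS : ℂ := ((√β / dAP : ℝ) : ℂ) * Complex.exp (-(ψ₂ * Complex.I))
  set cG : ℂ := ((√β / dTA : ℝ) : ℂ) * Complex.exp (-(ψ₃ * Complex.I))
  set k : ℂ := η * cS * star cH * Np
  have hS' : S = cS • vecMulVec sbar (star stil) := by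
    rw [hS]; ext i j; simp [vecMulVec]
  have hPIRS : star hbar ⬝ᵥ (θP * sbar) = Np := by
    simpa [dotProduct, mul_assoc] using halignP
  have hAIRS : (star stil * θA) ⬝ᵥ gbar = Na := by
    simpa [dotProduct] using halignA
  have hw : star h ᵥ* (diagonal θP * S * ((η : ℂ) • diagonal θA)) = k • (star stil * θA) := by
    have hh' : h = cH • hbar := hh
    simp only [hh', hS', star_smul, Matrix.mul_smul, Matrix.smul_mul, vecMul_smul,
      vecMul_diagonal_mul_vecMulVec_mul_diagonal, smul_dotProduct, hPIRS, smul_smul, smul_eq_mul,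
      k, mul_assoc]
  have hg' : g = cG • gbar := hg
  have hnorm_w : ∀ j, ‖(k • (star stil * θA)) j‖ = ‖k‖ := fun j => by
    simp [hstil, hθA]
  have hnorm_H : ‖cH‖ = √β / HP := Complex.norm_ofReal_mul_exp_neg_mul_I (by positivity) ψ₁
  have hnorm_S : ‖cS‖ = √β / dAP := Complex.norm_ofReal_mul_exp_neg_mul_I (by positivity) ψ₂
  have hnorm_G : ‖cG‖ = √β / dTA := Complex.norm_ofReal_mul_exp_neg_mul_I (by positivity) ψ₃
  have hnorm_k : ‖k‖ = η * (√β / dAP) * (√β / HP) * Np := by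
    simp only [k, norm_mul, norm_star, hnorm_H, hnorm_S, Complex.norm_real,
      Real.norm_of_nonneg (hη ▸ Real.sqrt_nonneg _), norm_natCast]
  rw [hw, hg', dotProduct_smul, smul_dotProduct, hAIRS]
  simp only [hnorm_w, Finset.sum_const, Finset.card_univ, Fintype.card_fin, nsmul_eq_mul,
    smul_eq_mul, norm_mul, hnorm_k, hnorm_G, norm_natCast]
  have hη2 : η ^ 2 = PF * dTA ^ 2 / (Na * (Pt * β + dTA ^ 2 * σF2)) := by
    rw [hη, Real.sq_sqrt (by positivity)]
  convert tapr_snr_eq_of_eta_sq (Nat.cast_pos.mpr hNa) hβ hHP hdTA hdAP hPt hσF2 hη2 using 2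
  ring

open Matrix in
/-- TAPR scheme: closed-form receive SNR (equations (16)-(17) of the paper).
With rank-one LOS channels, phase-aligned reflection matrices and the
power-tight amplification factor `η`, the receive SNR equals
`P_t P_F β² N_a N_p² / (C₁ d_TA² + C₂ d_AP² + C₃ d_TA² d_AP²)`. -/
theorem tapr_snr_closed_form (Na Np : ℕ) (hNa : 0 < Na) (hNp : 0 < Np)
    (β HP dTA dAP Pt PF σ2 σF2 : ℝ)
    (hβ : 0 < β) (hHP : 0 < HP) (hdTA : 0 < dTA) (hdAP : 0 < dAP)
    (hPt : 0 < Pt) (hPF : 0 < PF) (hσ2 : 0 < σ2) (hσF2 : 0 < σF2)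
    (hbar sbar : Fin Np → ℂ) (stil gbar : Fin Na → ℂ)
    (hhbar : ∀ i, Norm.norm (hbar i) = 1) (hsbar : ∀ i, Norm.norm (sbar i) = 1)
    (hstil : ∀ j, Norm.norm (stil j) = 1) (hgbar : ∀ j, Norm.norm (gbar j) = 1)
    (ψ₁ ψ₂ ψ₃ : ℝ)
    (h : Fin Np → ℂ)
    (hh : h = fun i => ((Real.sqrt β / HP : ℝ) : ℂ) *
      Complex.exp (-((ψ₁ : ℝ) * Complex.I)) * hbar i)
    (S : Matrix (Fin Np) (Fin Na) ℂ)
    (hS : S = fun i j => ((Real.sqrt β / dAP : ℝ) : ℂ) *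
      Complex.exp (-((ψ₂ : ℝ) * Complex.I)) * (sbar i * (starRingEnd ℂ) (stil j)))
    (g : Fin Na → ℂ)
    (hg : g = fun j => ((Real.sqrt β / dTA : ℝ) : ℂ) *
      Complex.exp (-((ψ₃ : ℝ) * Complex.I)) * gbar j)
    (θP : Fin Np → ℂ) (θA : Fin Na → ℂ)
    (hθP : ∀ i, Norm.norm (θP i) = 1) (hθA : ∀ j, Norm.norm (θA j) = 1)
    (halignA : ∑ j, (starRingEnd ℂ) (stil j) * θA j * gbar j = (Na : ℂ))
    (halignP : ∑ i, (starRingEnd ℂ) (hbar i) * θP i * sbar i = (Np : ℂ))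
    (η : ℝ)
    (hη : η = Real.sqrt (PF * dTA ^ 2 / ((Na : ℝ) * (Pt * β + dTA ^ 2 * σF2)))) :
    (Norm.norm (dotProduct
        (Matrix.vecMul (star h)
          (Matrix.diagonal θP * S * ((η : ℂ) • Matrix.diagonal θA))) g)) ^ 2 * Pt /
      ((∑ j, (Norm.norm ((Matrix.vecMul (star h)
          (Matrix.diagonal θP * S * ((η : ℂ) • Matrix.diagonal θA))) j)) ^ 2) * σF2 + σ2)
    = Pt * PF * β ^ 2 * (Na : ℝ) * (Np : ℝ) ^ 2 /
        ((σF2 * PF * β * (Np : ℝ) ^ 2) * dTA ^ 2 + (σ2 * Pt * HP ^ 2) * dAP ^ 2 +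
          (HP ^ 2 * σF2 * σ2 / β) * dTA ^ 2 * dAP ^ 2) :=
  tapr_snr_closed_form_general Na Np hNa β HP dTA dAP Pt PF σ2 σF2 hβ hHP hdTA hdAP hPt hPF hσF2
    hbar sbar stil gbar hstil ψ₁ ψ₂ ψ₃ h hh S hS g hg θP θA hθA halignA halignP η hη
end

section
/- Fix positive integers N_a, N_p and positive reals β, H_P, d_PA, d_AR, P_t, P_F, σ², σ_F². Let h̄, s̄ ∈ ℂ^{N_a} and s̃, ḡ ∈ ℂ^{N_p} be vectors all of whose entries have unit modulus, and let ψ₁, ψ₂, ψ₃ ∈ ℝ. Define the channels h = (√β/d_AR)e^{-iψ₁} h̄ ∈ ℂ^{N_a}, S = (√β/d_PA)e^{-iψ₂} s̄ s̃^H ∈ ℂ^{N_a×N_p}, g = (√β/H_P)e^{-iψ₃} ḡ ∈ ℂ^{N_p}. Let Θ_A ∈ ℂ^{N_a×N_a} and Θ_P ∈ ℂ^{N_p×N_p} be diagonal matrices with unit-modulus diagonal entries satisfying h̄^H Θ_A s̄ = N_a and s̃^H Θ_P ḡ = N_p, and set η = √(P_F d_PA² H_P² / (N_a(P_t β² N_p²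 + d_PA² σ_F² H_P²))). Then the receive SNR |h^H Θ_A η S Θ_P g|² P_t / (η² ‖h^H Θ_A‖² σ_F² + σ²) equals N_a β² N_p² P_t P_F / (P_F σ_F² H_P² d_PA² + P_t σ² β N_p² d_AR² + C₃ d_PA² d_AR²), where C₃ = H_P² σ_F² σ²/β. -/
/-! Every channel is rank one, so the received amplitude factors into `η`, the three path gains
and the two aligned inner products `h̄ᴴ Θ_A s̄ = N_a` and `s̃ᴴ Θ_P ḡ = N_p`, while unit-modulus
entries give `‖hᴴ Θ_A‖² = N_a β / d_AR²`. Once `η²` is substituted, the SNR is a rational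
identity in the real parameters. -/

open Matrix

section RankOne

variable {R : Type*} [CommSemiring R] {m n : Type*} [Fintype m] [Fintype n]
  [DecidableEq m] [DecidableEq n]

theorem dotProduct_vecMul_diagonal_mul_vecMulVec_mul_diagonal
    (y θ w : m → R) (z φ x : n → R) :
    y ᵥ* (diagonal θ * vecMulVec w z * diagonal φ) ⬝ᵥ x
      = (∑ i, y i * θ i * w i) * ∑ j, z j * φ j * x j := by
  rw [← vecMul_vecMul, ← vecMul_vecMul, vecMul_vecMulVec, smul_vecMul, smul_dotProduct,
    smul_eq_mul]
  simp only [dotProduct, vecMul_diagonal]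

theorem smul_vecMul_diagonal_mul_smul_vecMulVec_mul_diagonal_dotProduct_smul
    (a η b c : R) (y θ w : m → R) (z φ x : n → R) :
    (a • y) ᵥ* (diagonal θ * (η • ((b • vecMulVec w z) * diagonal φ))) ⬝ᵥ (c • x)
      = a * η * b * c * ((∑ i, y i * θ i * w i) * ∑ j, z j * φ j * x j) := by
  simp only [Matrix.smul_mul, Matrix.mul_smul, ← Matrix.mul_assoc, smul_vecMul, vecMul_smul,
    smul_dotProduct, dotProduct_smul, dotProduct_vecMul_diagonal_mul_vecMulVec_mul_diagonal,
    smul_eq_mul]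
  ring

end RankOne

theorem sum_norm_sq_star_smul_vecMul_diagonal {𝕜 : Type*} [RCLike 𝕜] {m : Type*} [Fintype m]
    [DecidableEq m] (a : 𝕜) (u θ : m → 𝕜) (hu : ∀ i, ‖u i‖ = 1) (hθ : ∀ i, ‖θ i‖ = 1) :
    ∑ i, ‖(star (a • u) ᵥ* diagonal θ) i‖ ^ 2 = Fintype.card m * ‖a‖ ^ 2 := by
  simp [vecMul_diagonal, hu, hθ]

noncomputable def losGain (β d ψ : ℝ) : ℂ :=
  ((Real.sqrt β / d : ℝ) : ℂ) * Complex.exp (-((ψ : ℝ) * Complex.I))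

theorem norm_losGain_sq {β : ℝ} (hβ : 0 ≤ β) (d ψ : ℝ) : ‖losGain β d ψ‖ ^ 2 = β / d ^ 2 := by
  rw [losGain, ← neg_mul, ← Complex.ofReal_neg, norm_mul, Complex.norm_exp_ofReal_mul_I,
    mul_one, Complex.norm_real, Real.norm_eq_abs, sq_abs, div_pow, Real.sq_sqrt hβ]

open Matrix in
theorem tpar_snr_closed_form_general (Na Np : ℕ) (hNa : 0 < Na)
    (β HP dPA dAR Pt PF σ2 σF2 : ℝ)
    (hβ : 0 < β) (hHP : 0 < HP) (hdPA : 0 < dPA) (hdAR : 0 < dAR)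
    (hPt : 0 < Pt) (hPF : 0 < PF) (hσF2 : 0 < σF2)
    (hbar sbar : Fin Na → ℂ) (stil gbar : Fin Np → ℂ)
    (hhbar : ∀ i, ‖hbar i‖ = 1)
    (ψ₁ ψ₂ ψ₃ : ℝ)
    (h : Fin Na → ℂ)
    (hh : h = fun i => ((Real.sqrt β / dAR : ℝ) : ℂ) *
      Complex.exp (-((ψ₁ : ℝ) * Complex.I)) * hbar i)
    (S : Matrix (Fin Na) (Fin Np) ℂ)
    (hS : S = fun i j => ((Real.sqrt β / dPA : ℝ) : ℂ) *
      Complex.exp (-((ψ₂ : ℝ) * Complex.I)) * (sbar i * (starRingEnd ℂ) (stil j)))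
    (g : Fin Np → ℂ)
    (hg : g = fun j => ((Real.sqrt β / HP : ℝ) : ℂ) *
      Complex.exp (-((ψ₃ : ℝ) * Complex.I)) * gbar j)
    (θA : Fin Na → ℂ) (θP : Fin Np → ℂ)
    (hθA : ∀ i, ‖θA i‖ = 1)
    (halignA : ∑ i, (starRingEnd ℂ) (hbar i) * θA i * sbar i = (Na : ℂ))
    (halignP : ∑ j, (starRingEnd ℂ) (stil j) * θP j * gbar j = (Np : ℂ))
    (η : ℝ)
    (hη : η = Real.sqrt (PF * dPA ^ 2 * HP ^ 2 /
      ((Na : ℝ) * (Pt * β ^ 2 * (Np : ℝ) ^ 2 + dPA ^ 2 * σF2 * HP ^ 2)))) :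
    (‖dotProduct
        (Matrix.vecMul (star h)
          (Matrix.diagonal θA * ((η : ℂ) • (S * Matrix.diagonal θP)))) g‖) ^ 2 * Pt /
      (η ^ 2 * (∑ i, (‖(Matrix.vecMul (star h) (Matrix.diagonal θA)) i‖) ^ 2) *
          σF2 + σ2)
    = (Na : ℝ) * β ^ 2 * (Np : ℝ) ^ 2 * Pt * PF /
        (PF * σF2 * HP ^ 2 * dPA ^ 2 + Pt * σ2 * β * (Np : ℝ) ^ 2 * dAR ^ 2 +
          (HP ^ 2 * σF2 * σ2 / β) * dPA ^ 2 * dAR ^ 2) := by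
  have hη2 : η ^ 2 = PF * dPA ^ 2 * HP ^ 2 /
      ((Na : ℝ) * (Pt * β ^ 2 * (Np : ℝ) ^ 2 + dPA ^ 2 * σF2 * HP ^ 2)) := by
    rw [hη, Real.sq_sqrt (by positivity)]
  obtain rfl : h = losGain β dAR ψ₁ • hbar := hh
  obtain rfl : S = losGain β dPA ψ₂ • vecMulVec sbar (star stil) := hS
  obtain rfl : g = losGain β HP ψ₃ • gbar := hg
  rw [sum_norm_sq_star_smul_vecMul_diagonal _ _ _ hhbar hθA, star_smul,
    smul_vecMul_diagonal_mul_smul_vecMulVec_mul_diagonal_dotProduct_smul]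
  simp only [Pi.star_apply, Complex.star_def, halignA, halignP, norm_mul, mul_pow,
    Complex.norm_conj, norm_losGain_sq hβ.le, Complex.norm_real, Real.norm_eq_abs, sq_abs,
    Complex.norm_natCast, Fintype.card_fin]
  have hNa' : (0 : ℝ) < Na := Nat.cast_pos.mpr hNa
  rw [hη2]
  field_simp
  ring

open Matrix in
/-- TPAR scheme: closed-form receive SNR (equations (20)-(21) of the paper).
With rank-one LOS channels, phase-aligned reflection matrices and the
power-tight amplification factor `η`, the receive SNR equals
`N_a β² N_p² P_t P_F / (P_F σ_F² H_P² d_PA² + P_t σ² β N_p² d_AR² + C₃ d_PA² d_AR²)`. -/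
theorem tpar_snr_closed_form (Na Np : ℕ) (hNa : 0 < Na) (hNp : 0 < Np)
    (β HP dPA dAR Pt PF σ2 σF2 : ℝ)
    (hβ : 0 < β) (hHP : 0 < HP) (hdPA : 0 < dPA) (hdAR : 0 < dAR)
    (hPt : 0 < Pt) (hPF : 0 < PF) (hσ2 : 0 < σ2) (hσF2 : 0 < σF2)
    (hbar sbar : Fin Na → ℂ) (stil gbar : Fin Np → ℂ)
    (hhbar : ∀ i, ‖hbar i‖ = 1) (hsbar : ∀ i, ‖sbar i‖ = 1)
    (hstil : ∀ j, ‖stil j‖ = 1) (hgbar : ∀ j, ‖gbar j‖ = 1)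
    (ψ₁ ψ₂ ψ₃ : ℝ)
    (h : Fin Na → ℂ)
    (hh : h = fun i => ((Real.sqrt β / dAR : ℝ) : ℂ) *
      Complex.exp (-((ψ₁ : ℝ) * Complex.I)) * hbar i)
    (S : Matrix (Fin Na) (Fin Np) ℂ)
    (hS : S = fun i j => ((Real.sqrt β / dPA : ℝ) : ℂ) *
      Complex.exp (-((ψ₂ : ℝ) * Complex.I)) * (sbar i * (starRingEnd ℂ) (stil j)))
    (g : Fin Np → ℂ)
    (hg : g = fun j => ((Real.sqrt β / HP : ℝ) : ℂ) *
      Complex.exp (-((ψ₃ : ℝ) * Complex.I)) * gbar j)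
    (θA : Fin Na → ℂ) (θP : Fin Np → ℂ)
    (hθA : ∀ i, ‖θA i‖ = 1) (hθP : ∀ j, ‖θP j‖ = 1)
    (halignA : ∑ i, (starRingEnd ℂ) (hbar i) * θA i * sbar i = (Na : ℂ))
    (halignP : ∑ j, (starRingEnd ℂ) (stil j) * θP j * gbar j = (Np : ℂ))
    (η : ℝ)
    (hη : η = Real.sqrt (PF * dPA ^ 2 * HP ^ 2 /
      ((Na : ℝ) * (Pt * β ^ 2 * (Np : ℝ) ^ 2 + dPA ^ 2 * σF2 * HP ^ 2)))) :
    (‖dotProduct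
        (Matrix.vecMul (star h)
          (Matrix.diagonal θA * ((η : ℂ) • (S * Matrix.diagonal θP)))) g‖) ^ 2 * Pt /
      (η ^ 2 * (∑ i, (‖(Matrix.vecMul (star h) (Matrix.diagonal θA)) i‖) ^ 2) *
          σF2 + σ2)
    = (Na : ℝ) * β ^ 2 * (Np : ℝ) ^ 2 * Pt * PF /
        (PF * σF2 * HP ^ 2 * dPA ^ 2 + Pt * σ2 * β * (Np : ℝ) ^ 2 * dAR ^ 2 +
          (HP ^ 2 * σF2 * σ2 / β) * dPA ^ 2 * dAR ^ 2) :=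
  tpar_snr_closed_form_general Na Np hNa β HP dPA dAR Pt PF σ2 σF2 hβ hHP hdPA hdAR hPt hPF hσF2
    hbar sbar stil gbar hhbar ψ₁ ψ₂ ψ₃ h hh S hS g hg θA θP hθA halignA halignP η hη
end

section
/- Let D, β, H_P, P_t, P_F, σ², σ_F², N_p, N_a be positive reals and let C₁ = σ_F² P_F β N_p², C₂ = σ² P_t H_P², a = P_t σ²/(P_F σ_F²), b = β N_p²/H_P², K = P_t P_F β² N_a N_p². Then C₂D/(C₁ + C₂) = aD/(a + b), and for any L with 0 ≤ L ≤ D, the function x ↦ K/(C₁x² + C₂(D − x)²) attains its maximum over [L, D] at the unique point x = max{aD/(a + b), L}. -/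
/-! Completing the square, `C₁x² + C₂(D - x)² = (C₁ + C₂)(x - t)² + C₁C₂D²/(C₁ + C₂)` with
vertex `t = C₂D/(C₁ + C₂)`, so maximizing the SNR over `[L, D]` means minimizing `(x - t)²`
there. Since `t ≤ D`, the closest point of `[L, D]` to `t` is `max t L`, and every other point
is strictly farther. The identity `C₂D/(C₁ + C₂) = aD/(a + b)` is the proportionality
`a C₁ = b C₂`. -/

lemma sq_sub_max_lt_sq_sub {t L x : ℝ} (hx : L ≤ x) (hne : x ≠ max t L) :
    (max t L - t) ^ 2 < (x - t) ^ 2 := by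
  rcases le_total L t with hLt | htL
  · rw [max_eq_left hLt] at hne ⊢
    simpa using sq_pos_of_ne_zero (sub_ne_zero.mpr hne)
  · rw [max_eq_right htL] at hne ⊢
    have hLx : L < x := lt_of_le_of_ne hx (Ne.symm hne)
    exact pow_lt_pow_left₀ (by linarith) (by linarith) two_ne_zero

section WeightedSquares

variable {c₁ c₂ D : ℝ}

lemma weighted_sq_add_sq_eq (hc : c₁ + c₂ ≠ 0) (x : ℝ) :
    c₁ * x ^ 2 + c₂ * (D - x) ^ 2 =
      (c₁ + c₂) * (x - c₂ * D / (c₁ + c₂)) ^ 2 + c₁ * c₂ * D ^ 2 / (c₁ + c₂) := by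
  field_simp
  ring

lemma weighted_sq_add_sq_pos (hc₁ : 0 < c₁) (hc₂ : 0 < c₂) (hD : D ≠ 0) (x : ℝ) :
    0 < c₁ * x ^ 2 + c₂ * (D - x) ^ 2 := by
  rw [weighted_sq_add_sq_eq (by positivity)]
  positivity

lemma vertex_le (hc₁ : 0 ≤ c₁) (hc : 0 < c₁ + c₂) (hD : 0 ≤ D) : c₂ * D / (c₁ + c₂) ≤ D := by
  rw [div_le_iff₀ hc]
  nlinarith

lemma weighted_sq_add_sq_max_vertex_lt (hc : 0 < c₁ + c₂) {L x : ℝ} (hx : L ≤ x)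
    (hne : x ≠ max (c₂ * D / (c₁ + c₂)) L) :
    c₁ * (max (c₂ * D / (c₁ + c₂)) L) ^ 2 + c₂ * (D - max (c₂ * D / (c₁ + c₂)) L) ^ 2 <
      c₁ * x ^ 2 + c₂ * (D - x) ^ 2 := by
  rw [weighted_sq_add_sq_eq hc.ne', weighted_sq_add_sq_eq hc.ne']
  gcongr (c₁ + c₂) * ?_ + _
  exact sq_sub_max_lt_sq_sub hx hne

end WeightedSquares

/-- TAPR scheme, approximated placement problem (equations (18) and (22) of the
paper): `C₂D/(C₁+C₂) = aD/(a+b)`, and the approximated SNR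
`x ↦ K/(C₁x² + C₂(D-x)²)` attains its maximum over `[L, D]` at the unique
point `max (aD/(a+b)) L`. -/
theorem tapr_approx_placement (D β HP Pt PF σ2 σF2 Np Na : ℝ)
    (hD : 0 < D) (hβ : 0 < β) (hHP : 0 < HP) (hPt : 0 < Pt) (hPF : 0 < PF)
    (hσ2 : 0 < σ2) (hσF2 : 0 < σF2) (hNp : 0 < Np) (hNa : 0 < Na)
    (C₁ C₂ a b K : ℝ)
    (hC₁ : C₁ = σF2 * PF * β * Np ^ 2) (hC₂ : C₂ = σ2 * Pt * HP ^ 2)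
    (ha : a = Pt * σ2 / (PF * σF2)) (hb : b = β * Np ^ 2 / HP ^ 2)
    (hK : K = Pt * PF * β ^ 2 * Na * Np ^ 2) :
    C₂ * D / (C₁ + C₂) = a * D / (a + b) ∧
    ∀ L : ℝ, 0 ≤ L → L ≤ D →
      max (a * D / (a + b)) L ∈ Set.Icc L D ∧
      (∀ x ∈ Set.Icc L D,
        K / (C₁ * x ^ 2 + C₂ * (D - x) ^ 2) ≤
          K / (C₁ * (max (a * D / (a + b)) L) ^ 2 +
            C₂ * (D - max (a * D / (a + b)) L) ^ 2)) ∧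
      (∀ x ∈ Set.Icc L D,
        K / (C₁ * x ^ 2 + C₂ * (D - x) ^ 2) =
          K / (C₁ * (max (a * D / (a + b)) L) ^ 2 +
            C₂ * (D - max (a * D / (a + b)) L) ^ 2) →
        x = max (a * D / (a + b)) L) := by
  have hC₁pos : 0 < C₁ := by rw [hC₁]; positivity
  have hC₂pos : 0 < C₂ := by rw [hC₂]; positivity
  have hKpos : 0 < K := by rw [hK]; positivity
  have hvertex : C₂ * D / (C₁ + C₂) = a * D / (a + b) := by
    subst hC₁ hC₂ ha hb
    field_simp
    ring
  refine ⟨hvertex, fun L _ hLD => ?_⟩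
  rw [← hvertex]
  have hlt : ∀ x ∈ Set.Icc L D, x ≠ max (C₂ * D / (C₁ + C₂)) L →
      K / (C₁ * x ^ 2 + C₂ * (D - x) ^ 2) <
        K / (C₁ * (max (C₂ * D / (C₁ + C₂)) L) ^ 2 +
          C₂ * (D - max (C₂ * D / (C₁ + C₂)) L) ^ 2) := fun x hx hne =>
    div_lt_div_of_pos_left hKpos (weighted_sq_add_sq_pos hC₁pos hC₂pos hD.ne' _)
      (weighted_sq_add_sq_max_vertex_lt (by positivity) hx.1 hne)
  refine ⟨⟨le_max_right _ _, max_le (vertex_le hC₁pos.le (by positivity) hD.le) hLD⟩,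
    fun x hx => ?_, fun x hx hxeq => ?_⟩
  · rcases eq_or_ne x (max (C₂ * D / (C₁ + C₂)) L) with rfl | hne
    · exact le_rfl
    · exact (hlt x hx hne).le
  · by_contra hne
    exact (hlt x hx hne).ne hxeq
end

section
/- Let D, β, H_P, P_t, P_F, σ², σ_F², N_p, N_a be positive reals and let C₁ = σ_F² P_F β N_p², C₂ = σ² P_t H_P², a = P_t σ²/(P_F σ_F²), b = β N_p²/H_P², K = P_t P_F β² N_a N_p². Then at x* = aD/(a + b), K/(C₁(x*)² + C₂(D − x*)²) = (β N_a / D²)·(P_t/σ_F² + P_F β N_p²/(σ² H_P²)). -/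
/-!
Writing `C₁ x² + C₂ (D - x)²` for the denominator, the relation `a C₁ = b C₂` turns the
optimizer `aD/(a + b)` into the balance point `C₂D/(C₁ + C₂)`, where the denominator takes
the value `C₁C₂D²/(C₁ + C₂)`. Hence the SNR is `(K/C₁ + K/C₂)/D²`, and the two summands are
the two terms of the bracket in (24).
-/

section Field

variable {F : Type*} [Field F]

theorem mul_div_add_eq_of_mul_eq_mul {a b C₁ C₂ : F} (h : a * C₁ = b * C₂)
    (hab : a + b ≠ 0) (hC : C₁ + C₂ ≠ 0) (D : F) :
    a * D / (a + b) = C₂ * D / (C₁ + C₂) := by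
  rw [div_eq_div_iff hab hC]
  linear_combination D * h

theorem mul_sq_add_mul_sub_sq_at_balance {C₁ C₂ : F} (hC : C₁ + C₂ ≠ 0) (D : F) :
    C₁ * (C₂ * D / (C₁ + C₂)) ^ 2 + C₂ * (D - C₂ * D / (C₁ + C₂)) ^ 2 =
      C₁ * C₂ * D ^ 2 / (C₁ + C₂) := by
  field_simp
  ring

theorem div_mul_mul_div_add {C₁ C₂ : F} (hC₁ : C₁ ≠ 0) (hC₂ : C₂ ≠ 0) (K D : F) :
    K / (C₁ * C₂ * D ^ 2 / (C₁ + C₂)) = (K / C₁ + K / C₂) / D ^ 2 := by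
  rw [div_div_eq_mul_div, div_add_div _ _ hC₁ hC₂]
  ring

end Field

theorem tapr_approx_snr_value_general (D β HP Pt PF σ2 σF2 Np Na : ℝ)
    (hβ : 0 < β) (hHP : 0 < HP) (hPt : 0 < Pt) (hPF : 0 < PF)
    (hσ2 : 0 < σ2) (hσF2 : 0 < σF2) (hNp : 0 < Np)
    (C₁ C₂ a b K : ℝ)
    (hC₁ : C₁ = σF2 * PF * β * Np ^ 2) (hC₂ : C₂ = σ2 * Pt * HP ^ 2)
    (ha : a = Pt * σ2 / (PF * σF2)) (hb : b = β * Np ^ 2 / HP ^ 2)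
    (hK : K = Pt * PF * β ^ 2 * Na * Np ^ 2) :
    K / (C₁ * (a * D / (a + b)) ^ 2 + C₂ * (D - a * D / (a + b)) ^ 2) =
      (β * Na / D ^ 2) * (Pt / σF2 + PF * β * Np ^ 2 / (σ2 * HP ^ 2)) := by
  have hC₁pos : 0 < C₁ := by rw [hC₁]; positivity
  have hC₂pos : 0 < C₂ := by rw [hC₂]; positivity
  have hab : a + b ≠ 0 := by rw [ha, hb]; positivity
  have hbalance : a * C₁ = b * C₂ := by
    rw [ha, hb, hC₁, hC₂]
    field_simp
  rw [mul_div_add_eq_of_mul_eq_mul hbalance hab (by positivity),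
    mul_sq_add_mul_sub_sq_at_balance (by positivity),
    div_mul_mul_div_add hC₁pos.ne' hC₂pos.ne']
  subst hC₁ hC₂ hK
  field_simp

/-- TAPR scheme: value of the approximated receive SNR at the unconstrained
optimizer `x* = aD/(a+b)` (equation (24) of the paper). -/
theorem tapr_approx_snr_value (D β HP Pt PF σ2 σF2 Np Na : ℝ)
    (hD : 0 < D) (hβ : 0 < β) (hHP : 0 < HP) (hPt : 0 < Pt) (hPF : 0 < PF)
    (hσ2 : 0 < σ2) (hσF2 : 0 < σF2) (hNp : 0 < Np) (hNa : 0 < Na)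
    (C₁ C₂ a b K : ℝ)
    (hC₁ : C₁ = σF2 * PF * β * Np ^ 2) (hC₂ : C₂ = σ2 * Pt * HP ^ 2)
    (ha : a = Pt * σ2 / (PF * σF2)) (hb : b = β * Np ^ 2 / HP ^ 2)
    (hK : K = Pt * PF * β ^ 2 * Na * Np ^ 2) :
    K / (C₁ * (a * D / (a + b)) ^ 2 + C₂ * (D - a * D / (a + b)) ^ 2) =
      (β * Na / D ^ 2) * (Pt / σF2 + PF * β * Np ^ 2 / (σ2 * HP ^ 2)) :=
  tapr_approx_snr_value_general D β HP Pt PF σ2 σF2 Np Na hβ hHP hPt hPF hσ2 hσF2 hNp C₁ C₂ a b K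
    hC₁ hC₂ ha hb hK
end

section
/- Let D, β, H_P, P_t, P_F, σ², σ_F², N_p, N_a be positive reals and let C₁ = σ_F² P_F β N_p², C₂ = σ² P_t H_P², a = P_t σ²/(P_F σ_F²), b = β N_p²/H_P², K = P_t P_F β² N_a N_p². Then at x* = abD/(ab + 1), K/((C₂/a)(x*)² + aC₁(D − x*)²) = (β N_a / D²)·(P_t β N_p²/(σ_F² H_P²) + P_F/σ²). -/
/-!
Put `p = C₂/a` and `q = aC₁`. Then `q = ab·p`, so `x* = qD/(p+q)` is the minimiser of the
weighted quadratic `p x² + q (D - x)²`, whose minimum is the harmonic-type value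
`D²/(p⁻¹ + q⁻¹)`. Hence the approximated SNR at `x*` is `K (p⁻¹ + q⁻¹)/D²`, and the two
terms `K/p` and `K/q` are exactly the two summands of (29), each multiplied by `β N_a`.
-/

theorem mul_div_add_one_eq_of_eq_mul {𝕜 : Type*} [Field 𝕜] {p q s : 𝕜} (D : 𝕜) (hp : p ≠ 0)
    (hq : q = s * p) : s * D / (s + 1) = q * D / (p + q) := by
  rw [hq, show p + s * p = (s + 1) * p by ring, mul_assoc, mul_comm p D, ← mul_assoc,
    mul_div_mul_right _ _ hp]

theorem weighted_sq_at_min {𝕜 : Type*} [Field 𝕜] {p q : 𝕜} (D : 𝕜) (hp : p ≠ 0) (hq : q ≠ 0)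
    (hpq : p + q ≠ 0) :
    p * (q * D / (p + q)) ^ 2 + q * (D - q * D / (p + q)) ^ 2 = D ^ 2 / (p⁻¹ + q⁻¹) := by
  rw [inv_add_inv hp hq]
  field_simp
  ring

theorem tpar_approx_snr_value_general (D β HP Pt PF σ2 σF2 Np Na : ℝ)
    (hβ : 0 < β) (hHP : 0 < HP) (hPt : 0 < Pt) (hPF : 0 < PF)
    (hσ2 : 0 < σ2) (hσF2 : 0 < σF2) (hNp : 0 < Np)
    (C₁ C₂ a b K : ℝ)
    (hC₁ : C₁ = σF2 * PF * β * Np ^ 2) (hC₂ : C₂ = σ2 * Pt * HP ^ 2)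
    (ha : a = Pt * σ2 / (PF * σF2)) (hb : b = β * Np ^ 2 / HP ^ 2)
    (hK : K = Pt * PF * β ^ 2 * Na * Np ^ 2) :
    K / ((C₂ / a) * (a * b * D / (a * b + 1)) ^ 2 +
        a * C₁ * (D - a * b * D / (a * b + 1)) ^ 2) =
      (β * Na / D ^ 2) * (Pt * β * Np ^ 2 / (σF2 * HP ^ 2) + PF / σ2) := by
  have hp : 0 < C₂ / a := by rw [hC₂, ha]; positivity
  have hq : 0 < a * C₁ := by rw [ha, hC₁]; positivity
  have hratio : a * C₁ = a * b * (C₂ / a) := by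
    rw [hC₁, hC₂, ha, hb]; field_simp
  have hKp : K * (C₂ / a)⁻¹ = β * Na * (Pt * β * Np ^ 2 / (σF2 * HP ^ 2)) := by
    rw [hK, hC₂, ha]; field_simp
  have hKq : K * (a * C₁)⁻¹ = β * Na * (PF / σ2) := by
    rw [hK, hC₁, ha]; field_simp
  rw [mul_div_add_one_eq_of_eq_mul D hp.ne' hratio,
    weighted_sq_at_min D hp.ne' hq.ne' (add_pos hp hq).ne', div_div_eq_mul_div,
    div_mul_eq_mul_div, mul_add, hKp, hKq, ← mul_add]

/-- TPAR scheme: value of the approximated receive SNR at the unconstrained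
optimizer `x* = abD/(ab+1)` (equation (29) of the paper). -/
theorem tpar_approx_snr_value (D β HP Pt PF σ2 σF2 Np Na : ℝ)
    (hD : 0 < D) (hβ : 0 < β) (hHP : 0 < HP) (hPt : 0 < Pt) (hPF : 0 < PF)
    (hσ2 : 0 < σ2) (hσF2 : 0 < σF2) (hNp : 0 < Np) (hNa : 0 < Na)
    (C₁ C₂ a b K : ℝ)
    (hC₁ : C₁ = σF2 * PF * β * Np ^ 2) (hC₂ : C₂ = σ2 * Pt * HP ^ 2)
    (ha : a = Pt * σ2 / (PF * σF2)) (hb : b = β * Np ^ 2 / HP ^ 2)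
    (hK : K = Pt * PF * β ^ 2 * Na * Np ^ 2) :
    K / ((C₂ / a) * (a * b * D / (a * b + 1)) ^ 2 +
        a * C₁ * (D - a * b * D / (a * b + 1)) ^ 2) =
      (β * Na / D ^ 2) * (Pt * β * Np ^ 2 / (σF2 * HP ^ 2) + PF / σ2) :=
  tpar_approx_snr_value_general D β HP Pt PF σ2 σF2 Np Na hβ hHP hPt hPF hσ2 hσF2 hNp C₁ C₂ a b K
    hC₁ hC₂ ha hb hK
end

section
/- Let D, β, H_P, P_t, P_F, σ², σ_F², N_p, N_a be positive reals. Define SNR̄_a = (βN_a/D²)·(P_t/σ_F² + P_F β N_p²/(σ² H_P²)) and SNR̄_b = (βN_a/D²)·(P_t β N_p²/(σ_F² H_P²) + P_F/σ²). If N_p ≤ H_P/√β and P_F ≤ P_t σ²/σ_F², then SNR̄_a ≥ SNR̄_b, and hence log₂(1 + SNR̄_a) ≥ log₂(1 + SNR̄_b). -/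
/-!
With `x = β N_p² / H_P²`, `a = P_t / σ_F²` and `b = P_F / σ²`, the two SNRs are the common gain
`β N_a / D²` times `a + b x` (TAPR) and `a x + b` (TPAR). The hypotheses give `x ≤ 1` and
`b ≤ a`, so the rearrangement inequality `a x + b ≤ a + b x` compares them, and `log₂ (1 + ·)` is
monotone on the nonnegative SNRs.
-/

open Real

lemma mul_sq_le_sq_of_le_div_sqrt {β y h : ℝ} (hβ : 0 < β) (hy : 0 ≤ y) (hyh : y ≤ h / √β) :
    β * y ^ 2 ≤ h ^ 2 :=
  calc β * y ^ 2 = (y * √β) ^ 2 := by rw [mul_pow, sq_sqrt hβ.le, mul_comm]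
    _ ≤ h ^ 2 := pow_le_pow_left₀ (by positivity) ((le_div_iff₀ (sqrt_pos.2 hβ)).1 hyh) 2

lemma div_le_div_of_le_mul_div {p q s t : ℝ} (hs : 0 < s) (h : p ≤ q * s / t) :
    p / s ≤ q / t :=
  calc p / s ≤ q * s / t / s := div_le_div_of_nonneg_right h hs.le
    _ = q / t := by field_simp

theorem tapr_beats_tpar_general (D β HP Pt PF σ2 σF2 Np Na : ℝ)
    (hβ : 0 < β) (hPt : 0 < Pt) (hPF : 0 < PF)
    (hσ2 : 0 < σ2) (hσF2 : 0 < σF2) (hNp : 0 < Np) (hNa : 0 < Na)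
    (hNpb : Np ≤ HP / Real.sqrt β) (hPFb : PF ≤ Pt * σ2 / σF2) :
    (β * Na / D ^ 2) * (Pt * β * Np ^ 2 / (σF2 * HP ^ 2) + PF / σ2) ≤
      (β * Na / D ^ 2) * (Pt / σF2 + PF * β * Np ^ 2 / (σ2 * HP ^ 2)) ∧
    Real.logb 2 (1 + (β * Na / D ^ 2) * (Pt * β * Np ^ 2 / (σF2 * HP ^ 2) + PF / σ2)) ≤
      Real.logb 2 (1 + (β * Na / D ^ 2) * (Pt / σF2 + PF * β * Np ^ 2 / (σ2 * HP ^ 2))) := by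
  have hx : β * Np ^ 2 / HP ^ 2 ≤ 1 :=
    div_le_one_of_le₀ (mul_sq_le_sq_of_le_div_sqrt hβ hNp.le hNpb) (sq_nonneg HP)
  have hba : PF / σ2 ≤ Pt / σF2 := div_le_div_of_le_mul_div hσ2 hPFb
  have hsum : Pt * β * Np ^ 2 / (σF2 * HP ^ 2) + PF / σ2 ≤
      Pt / σF2 + PF * β * Np ^ 2 / (σ2 * HP ^ 2) := by
    linear_combination mul_add_mul_le_mul_add_mul hba hx
  have hsnr := mul_le_mul_of_nonneg_left hsum (by positivity : 0 ≤ β * Na / D ^ 2)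
  exact ⟨hsnr, logb_le_logb_of_le one_lt_two (by positivity) (by linarith)⟩

/-- Proposition 1 of the paper (first case): if `N_p ≤ H_P/√β` and
`P_F ≤ P_tσ²/σ_F²`, then `SNR̄_a ≥ SNR̄_b` and hence
`log₂(1 + SNR̄_a) ≥ log₂(1 + SNR̄_b)`. -/
theorem tapr_beats_tpar (D β HP Pt PF σ2 σF2 Np Na : ℝ)
    (hD : 0 < D) (hβ : 0 < β) (hHP : 0 < HP) (hPt : 0 < Pt) (hPF : 0 < PF)
    (hσ2 : 0 < σ2) (hσF2 : 0 < σF2) (hNp : 0 < Np) (hNa : 0 < Na)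
    (hNpb : Np ≤ HP / Real.sqrt β) (hPFb : PF ≤ Pt * σ2 / σF2) :
    (β * Na / D ^ 2) * (Pt * β * Np ^ 2 / (σF2 * HP ^ 2) + PF / σ2) ≤
      (β * Na / D ^ 2) * (Pt / σF2 + PF * β * Np ^ 2 / (σ2 * HP ^ 2)) ∧
    Real.logb 2 (1 + (β * Na / D ^ 2) * (Pt * β * Np ^ 2 / (σF2 * HP ^ 2) + PF / σ2)) ≤
      Real.logb 2 (1 + (β * Na / D ^ 2) * (Pt / σF2 + PF * β * Np ^ 2 / (σ2 * HP ^ 2))) :=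
  tapr_beats_tpar_general D β HP Pt PF σ2 σF2 Np Na hβ hPt hPF hσ2 hσF2 hNp hNa hNpb hPFb
end

section
/- Let D, β, H_P, P_t, P_F, σ², σ_F², N_p, N_a be positive reals. Define SNR̄_a = (βN_a/D²)·(P_t/σ_F² + P_F β N_p²/(σ² H_P²)) and SNR̄_b = (βN_a/D²)·(P_t β N_p²/(σ_F² H_P²) + P_F/σ²). If N_p < H_P/√β and P_F > P_t σ²/σ_F², then SNR̄_a < SNR̄_b, and hence log₂(1 + SNR̄_a) < log₂(1 + SNR̄_b). -/
/-!
Dividing out the common gain `βN_a/D²`, the two bracketed sums are `x + y r` and `x r + y` with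
`x = P_t/σ_F²`, `y = P_F/σ²` and `r = βN_p²/H_P²`. Their difference is `(y - x)(1 - r)`, and the two
hypotheses say exactly that `x < y` and `r < 1`.
-/

theorem add_mul_lt_mul_add_of_lt_of_lt_one {α : Type*} [CommRing α] [LinearOrder α]
    [IsStrictOrderedRing α] {a b r : α} (hab : a < b) (hr : r < 1) :
    a + b * r < a * r + b := by
  nlinarith [mul_pos (sub_pos.2 hab) (sub_pos.2 hr)]

theorem mul_sq_div_sq_lt_one_of_lt_div_sqrt {β N H : ℝ} (hβ : 0 < β) (hN : 0 ≤ N)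
    (h : N < H / √β) : β * N ^ 2 / H ^ 2 < 1 := by
  have hlt : N * √β < H := (lt_div_iff₀ (Real.sqrt_pos.2 hβ)).1 h
  have hH : 0 < H := lt_of_le_of_lt (by positivity) hlt
  rw [div_lt_one (by positivity)]
  calc β * N ^ 2 = (N * √β) ^ 2 := by rw [mul_pow, Real.sq_sqrt hβ.le, mul_comm]
    _ < H ^ 2 := by gcongr

theorem tpar_beats_tapr_strict_general (D β HP Pt PF σ2 σF2 Np Na : ℝ)
    (hD : 0 < D) (hβ : 0 < β) (hPt : 0 < Pt) (hPF : 0 < PF)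
    (hσ2 : 0 < σ2) (hσF2 : 0 < σF2) (hNp : 0 < Np) (hNa : 0 < Na)
    (hNpb : Np < HP / Real.sqrt β) (hPFb : PF > Pt * σ2 / σF2) :
    (β * Na / D ^ 2) * (Pt / σF2 + PF * β * Np ^ 2 / (σ2 * HP ^ 2)) <
      (β * Na / D ^ 2) * (Pt * β * Np ^ 2 / (σF2 * HP ^ 2) + PF / σ2) ∧
    Real.logb 2 (1 + (β * Na / D ^ 2) * (Pt / σF2 + PF * β * Np ^ 2 / (σ2 * HP ^ 2))) <
      Real.logb 2 (1 + (β * Na / D ^ 2) * (Pt * β * Np ^ 2 / (σF2 * HP ^ 2) + PF / σ2)) := by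
  have hpower : Pt / σF2 < PF / σ2 := by
    rw [lt_div_iff₀ hσ2]
    calc Pt / σF2 * σ2 = Pt * σ2 / σF2 := by ring
      _ < PF := hPFb
  have hsum : Pt / σF2 + PF * β * Np ^ 2 / (σ2 * HP ^ 2) <
      Pt * β * Np ^ 2 / (σF2 * HP ^ 2) + PF / σ2 := by
    calc Pt / σF2 + PF * β * Np ^ 2 / (σ2 * HP ^ 2)
        = Pt / σF2 + PF / σ2 * (β * Np ^ 2 / HP ^ 2) := by ring
      _ < Pt / σF2 * (β * Np ^ 2 / HP ^ 2) + PF / σ2 :=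
        add_mul_lt_mul_add_of_lt_of_lt_one hpower
          (mul_sq_div_sq_lt_one_of_lt_div_sqrt hβ hNp.le hNpb)
      _ = Pt * β * Np ^ 2 / (σF2 * HP ^ 2) + PF / σ2 := by ring
  have hsnr := mul_lt_mul_of_pos_left hsum (by positivity : 0 < β * Na / D ^ 2)
  exact ⟨hsnr, Real.logb_lt_logb one_lt_two (by positivity) (by linarith)⟩

/-- Proposition 1 of the paper (strict converse case): if `N_p < H_P/√β` and
`P_F > P_tσ²/σ_F²`, then `SNR̄_a < SNR̄_b` and hence
`log₂(1 + SNR̄_a) < log₂(1 + SNR̄_b)`. -/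
theorem tpar_beats_tapr_strict (D β HP Pt PF σ2 σF2 Np Na : ℝ)
    (hD : 0 < D) (hβ : 0 < β) (hHP : 0 < HP) (hPt : 0 < Pt) (hPF : 0 < PF)
    (hσ2 : 0 < σ2) (hσF2 : 0 < σF2) (hNp : 0 < Np) (hNa : 0 < Na)
    (hNpb : Np < HP / Real.sqrt β) (hPFb : PF > Pt * σ2 / σF2) :
    (β * Na / D ^ 2) * (Pt / σF2 + PF * β * Np ^ 2 / (σ2 * HP ^ 2)) <
      (β * Na / D ^ 2) * (Pt * β * Np ^ 2 / (σF2 * HP ^ 2) + PF / σ2) ∧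
    Real.logb 2 (1 + (β * Na / D ^ 2) * (Pt / σF2 + PF * β * Np ^ 2 / (σ2 * HP ^ 2))) <
      Real.logb 2 (1 + (β * Na / D ^ 2) * (Pt * β * Np ^ 2 / (σF2 * HP ^ 2) + PF / σ2)) :=
  tpar_beats_tapr_strict_general D β HP Pt PF σ2 σF2 Np Na hD hβ hPt hPF hσ2 hσF2 hNp hNa hNpb hPFb
end

section
/- Let D, β, H_P, P_t, P_F, σ², σ_F², N_p, N_a be positive reals. Define SNR̄_a = (βN_a/D²)·(P_t/σ_F² + P_F β N_p²/(σ² H_P²)) and SNR̄_b = (βN_a/D²)·(P_t β N_p²/(σ_F² H_P²) + P_F/σ²). If N_p ≥ H_P/√β and P_F ≤ P_t σ²/σ_F², then SNR̄_b ≥ SNR̄_a; and if N_p ≥ H_P/√β and P_F ≥ P_t σ²/σ_F², then SNR̄_a ≥ SNR̄_b. -/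
/-!
With `g = β N_p² / H_P²`, both SNRs are
`a + b g` and `a g + b` with `a = P_t / σ_F²` and `b = P_F / σ²`, up to the common factor
`β N_a / D²`, and `(a g + b) - (a + b g) = (a - b)(g - 1)`. The reversed case is exactly
`g ≥ 1`, so the sign of the difference is that of `a - b`, i.e. of `P_t σ² / σ_F² - P_F`.
-/

theorem add_mul_le_mul_add {α : Type*} [CommRing α] [LinearOrder α] [IsStrictOrderedRing α]
    {a b g : α} (hg : 1 ≤ g) (hba : b ≤ a) : a + b * g ≤ a * g + b := by
  nlinarith [mul_nonneg (sub_nonneg.2 hba) (sub_nonneg.2 hg)]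

theorem one_le_mul_sq_div_sq_of_div_sqrt_le {β h n : ℝ} (hβ : 0 < β) (hh : 0 < h)
    (hn : h / Real.sqrt β ≤ n) : 1 ≤ β * n ^ 2 / h ^ 2 := by
  have hle : h ≤ n * Real.sqrt β := (div_le_iff₀ (Real.sqrt_pos.2 hβ)).1 hn
  have hsq : h ^ 2 ≤ β * n ^ 2 := by
    calc h ^ 2 ≤ (n * Real.sqrt β) ^ 2 := pow_le_pow_left₀ hh.le hle 2
      _ = β * n ^ 2 := by rw [mul_pow, Real.sq_sqrt hβ.le, mul_comm]
  exact (one_le_div (by positivity)).2 hsq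

theorem tapr_tpar_reversed_case_general (D β HP Pt PF σ2 σF2 Np Na : ℝ)
    (hβ : 0 < β) (hHP : 0 < HP)
    (hσ2 : 0 < σ2) (hσF2 : 0 < σF2) (hNa : 0 < Na)
    (hNpb : Np ≥ HP / Real.sqrt β) :
    (PF ≤ Pt * σ2 / σF2 →
      (β * Na / D ^ 2) * (Pt / σF2 + PF * β * Np ^ 2 / (σ2 * HP ^ 2)) ≤
        (β * Na / D ^ 2) * (Pt * β * Np ^ 2 / (σF2 * HP ^ 2) + PF / σ2)) ∧
    (PF ≥ Pt * σ2 / σF2 →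
      (β * Na / D ^ 2) * (Pt * β * Np ^ 2 / (σF2 * HP ^ 2) + PF / σ2) ≤
        (β * Na / D ^ 2) * (Pt / σF2 + PF * β * Np ^ 2 / (σ2 * HP ^ 2))) := by
  have hg : 1 ≤ β * Np ^ 2 / HP ^ 2 := one_le_mul_sq_div_sq_of_div_sqrt_le hβ hHP hNpb
  have hc : 0 ≤ β * Na / D ^ 2 := by positivity
  have hSNRa : Pt / σF2 + PF * β * Np ^ 2 / (σ2 * HP ^ 2) =
      Pt / σF2 + PF / σ2 * (β * Np ^ 2 / HP ^ 2) := by ring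
  have hSNRb : Pt * β * Np ^ 2 / (σF2 * HP ^ 2) + PF / σ2 =
      Pt / σF2 * (β * Np ^ 2 / HP ^ 2) + PF / σ2 := by ring
  rw [hSNRa, hSNRb]
  constructor
  · intro h
    exact mul_le_mul_of_nonneg_left
      (add_mul_le_mul_add hg ((div_le_div_iff₀ hσ2 hσF2).2 ((le_div_iff₀ hσF2).1 h))) hc
  · intro h
    rw [add_comm (Pt / σF2 * _), add_comm (Pt / σF2)]
    exact mul_le_mul_of_nonneg_left
      (add_mul_le_mul_add hg ((div_le_div_iff₀ hσF2 hσ2).2 ((div_le_iff₀ hσF2).1 h))) hc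

/-- Proposition 1 of the paper (reversed case `N_p ≥ H_P/√β`): if
`P_F ≤ P_tσ²/σ_F²` then `SNR̄_b ≥ SNR̄_a`, and if `P_F ≥ P_tσ²/σ_F²` then
`SNR̄_a ≥ SNR̄_b`. -/
theorem tapr_tpar_reversed_case (D β HP Pt PF σ2 σF2 Np Na : ℝ)
    (hD : 0 < D) (hβ : 0 < β) (hHP : 0 < HP) (hPt : 0 < Pt) (hPF : 0 < PF)
    (hσ2 : 0 < σ2) (hσF2 : 0 < σF2) (hNp : 0 < Np) (hNa : 0 < Na)
    (hNpb : Np ≥ HP / Real.sqrt β) :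
    (PF ≤ Pt * σ2 / σF2 →
      (β * Na / D ^ 2) * (Pt / σF2 + PF * β * Np ^ 2 / (σ2 * HP ^ 2)) ≤
        (β * Na / D ^ 2) * (Pt * β * Np ^ 2 / (σF2 * HP ^ 2) + PF / σ2)) ∧
    (PF ≥ Pt * σ2 / σF2 →
      (β * Na / D ^ 2) * (Pt * β * Np ^ 2 / (σF2 * HP ^ 2) + PF / σ2) ≤
        (β * Na / D ^ 2) * (Pt / σF2 + PF * β * Np ^ 2 / (σ2 * HP ^ 2))) :=
  tapr_tpar_reversed_case_general D β HP Pt PF σ2 σF2 Np Na hβ hHP hσ2 hσF2 hNa hNpb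
end

section
/- Let D, H_A, H_P, β, P_t, P_F, σ², σ_F², N_p be positive reals, and set C₁ = σ_F² P_F β N_p², C₂ = σ² P_t H_P², C₃ = H_P² σ_F² σ²/β. Define d_TA(x)² = x² + H_A² and d_AP(x)² = (D − x)² + (H_P − H_A)². If 4√(C₁C₂) ≥ C₃·(D² + H_A² + (H_P − H_A)²), then for every x ∈ [0, D], C₃ d_TA(x)² d_AP(x)² ≤ C₁ d_TA(x)² + C₂ d_AP(x)². -/
/-!
By AM–GM, `C₁ + C₂ ≥ 2√(C₁C₂)` and `C₁a² + C₂b² ≥ 2√(C₁C₂)ab`, so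
`(C₁a + C₂b)(a + b) ≥ 4√(C₁C₂)ab` for `a, b ≥ 0`. Hence `C₃(a + b) ≤ 4√(C₁C₂)` forces
`C₃ab ≤ C₁a + C₂b`. With `a = d_TA(x)²`, `b = d_AP(x)²` one has
`a + b ≤ D² + H_A² + (H_P − H_A)²` for `x ∈ [0, D]`, since `x² + (D − x)² ≤ D²` there.
-/

namespace Real

theorem two_mul_sqrt_mul_le_add {x y : ℝ} (hx : 0 ≤ x) (hy : 0 ≤ y) :
    2 * √(x * y) ≤ x + y := by
  have h := two_mul_le_add_sq (√x) (√y)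
  rwa [sq_sqrt hx, sq_sqrt hy, mul_assoc, ← sqrt_mul hx] at h

theorem four_mul_sqrt_mul_mul_le_add_mul_add {C₁ C₂ a b : ℝ} (hC₁ : 0 ≤ C₁) (hC₂ : 0 ≤ C₂)
    (ha : 0 ≤ a) (hb : 0 ≤ b) :
    4 * √(C₁ * C₂) * (a * b) ≤ (C₁ * a + C₂ * b) * (a + b) := by
  have hsq : √(C₁ * a ^ 2 * (C₂ * b ^ 2)) = √(C₁ * C₂) * (a * b) := by
    rw [show C₁ * a ^ 2 * (C₂ * b ^ 2) = C₁ * C₂ * (a * b) ^ 2 by ring,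
      sqrt_mul (by positivity), sqrt_sq (by positivity)]
  have hsquares : 2 * (√(C₁ * C₂) * (a * b)) ≤ C₁ * a ^ 2 + C₂ * b ^ 2 :=
    hsq ▸ two_mul_sqrt_mul_le_add (by positivity) (by positivity)
  have hcoeffs : 2 * √(C₁ * C₂) * (a * b) ≤ (C₁ + C₂) * (a * b) :=
    mul_le_mul_of_nonneg_right (two_mul_sqrt_mul_le_add hC₁ hC₂) (by positivity)
  linear_combination hsquares + hcoeffs

theorem mul_mul_le_add_of_mul_add_le_four_mul_sqrt {C₁ C₂ C₃ a b : ℝ} (hC₁ : 0 ≤ C₁)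
    (hC₂ : 0 ≤ C₂) (ha : 0 ≤ a) (hb : 0 ≤ b) (h : C₃ * (a + b) ≤ 4 * √(C₁ * C₂)) :
    C₃ * a * b ≤ C₁ * a + C₂ * b := by
  rcases (add_nonneg ha hb).eq_or_lt with hab | hab
  · obtain ⟨rfl, rfl⟩ := (add_eq_zero_iff_of_nonneg ha hb).1 hab.symm
    simp
  refine le_of_mul_le_mul_right ?_ hab
  calc C₃ * a * b * (a + b) = C₃ * (a + b) * (a * b) := by ring
    _ ≤ 4 * √(C₁ * C₂) * (a * b) := mul_le_mul_of_nonneg_right h (by positivity)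
    _ ≤ (C₁ * a + C₂ * b) * (a + b) := four_mul_sqrt_mul_mul_le_add_mul_add hC₁ hC₂ ha hb

end Real

theorem sq_add_sub_sq_le_sq {x D : ℝ} (hx : 0 ≤ x) (hxD : x ≤ D) :
    x ^ 2 + (D - x) ^ 2 ≤ D ^ 2 := by
  nlinarith [mul_nonneg hx (sub_nonneg.2 hxD)]

theorem tapr_cross_term_dominated_general (D HA HP β Pt PF σ2 σF2 Np : ℝ)
    (hβ : 0 < β) (hPt : 0 < Pt)
    (hPF : 0 < PF) (hσ2 : 0 < σ2) (hσF2 : 0 < σF2)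
    (C₁ C₂ C₃ : ℝ)
    (hC₁ : C₁ = σF2 * PF * β * Np ^ 2) (hC₂ : C₂ = σ2 * Pt * HP ^ 2)
    (hC₃ : C₃ = HP ^ 2 * σF2 * σ2 / β)
    (hcond : 4 * Real.sqrt (C₁ * C₂) ≥ C₃ * (D ^ 2 + HA ^ 2 + (HP - HA) ^ 2)) :
    ∀ x ∈ Set.Icc (0 : ℝ) D,
      C₃ * (x ^ 2 + HA ^ 2) * ((D - x) ^ 2 + (HP - HA) ^ 2) ≤
        C₁ * (x ^ 2 + HA ^ 2) + C₂ * ((D - x) ^ 2 + (HP - HA) ^ 2) := by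
  rintro x ⟨hx, hxD⟩
  have hC₁_nonneg : 0 ≤ C₁ := hC₁ ▸ by positivity
  have hC₂_nonneg : 0 ≤ C₂ := hC₂ ▸ by positivity
  have hC₃_nonneg : 0 ≤ C₃ := hC₃ ▸ by positivity
  have hsum : x ^ 2 + HA ^ 2 + ((D - x) ^ 2 + (HP - HA) ^ 2) ≤
      D ^ 2 + HA ^ 2 + (HP - HA) ^ 2 := by
    linarith [sq_add_sub_sq_le_sq hx hxD]
  exact Real.mul_mul_le_add_of_mul_add_le_four_mul_sqrt hC₁_nonneg hC₂_nonneg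
    (by positivity) (by positivity) ((mul_le_mul_of_nonneg_left hsum hC₃_nonneg).trans hcond)

/-- Precise form of Lemma 3 of the paper for the TAPR scheme: if
`4√(C₁C₂) ≥ C₃(D² + H_A² + (H_P−H_A)²)`, then for every `x ∈ [0, D]` the cross
term `C₃ d_TA(x)² d_AP(x)²` is dominated by `C₁ d_TA(x)² + C₂ d_AP(x)²`. -/
theorem tapr_cross_term_dominated (D HA HP β Pt PF σ2 σF2 Np : ℝ)
    (hD : 0 < D) (hHA : 0 < HA) (hHP : 0 < HP) (hβ : 0 < β) (hPt : 0 < Pt)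
    (hPF : 0 < PF) (hσ2 : 0 < σ2) (hσF2 : 0 < σF2) (hNp : 0 < Np)
    (C₁ C₂ C₃ : ℝ)
    (hC₁ : C₁ = σF2 * PF * β * Np ^ 2) (hC₂ : C₂ = σ2 * Pt * HP ^ 2)
    (hC₃ : C₃ = HP ^ 2 * σF2 * σ2 / β)
    (hcond : 4 * Real.sqrt (C₁ * C₂) ≥ C₃ * (D ^ 2 + HA ^ 2 + (HP - HA) ^ 2)) :
    ∀ x ∈ Set.Icc (0 : ℝ) D,
      C₃ * (x ^ 2 + HA ^ 2) * ((D - x) ^ 2 + (HP - HA) ^ 2) ≤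
        C₁ * (x ^ 2 + HA ^ 2) + C₂ * ((D - x) ^ 2 + (HP - HA) ^ 2) :=
  tapr_cross_term_dominated_general D HA HP β Pt PF σ2 σF2 Np hβ hPt hPF hσ2 hσF2 C₁ C₂ C₃ hC₁ hC₂
    hC₃ hcond
end

section
/- Let D, H_A, β, P_t, σ², σ_F², N_a, N_p, H_P be positive reals. For P_F > N_a σ_F², define a(P_F) = P_t σ²/(P_F σ_F²), b = β N_p²/H_P², x_a(P_F) = √(max{0, N_a β P_t/(P_F − N_a σ_F²) − H_A²}), and x^a(P_F) = max{a(P_F)D/(a(P_F) + b), x_a(P_F)}. Then x^a is non-increasing on (N_a σ_F², ∞): for all N_a σ_F² < P_F ≤ P_F', x^a(P_F') ≤ x^a(P_F). -/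
/-! Both arguments of the outer `max` are non-increasing in `P_F`: `a(P_F)` decreases, and
`a ↦ aD/(a + b)` is increasing on `a ≥ 0`; the threshold `x_a(P_F)` is a monotone function of
`N_a β P_t / (P_F - N_a σ_F²)`, which decreases on `P_F > N_a σ_F²`. -/

open Set

lemma monotoneOn_mul_div_add {b D : ℝ} (hb : 0 ≤ b) (hD : 0 ≤ D) :
    MonotoneOn (fun a : ℝ => a * D / (a + b)) (Ici 0) := by
  intro a' ha' a ha hle
  rcases (mem_Ici.mp ha').eq_or_lt with rfl | ha'pos
  · simp only [zero_mul, zero_div]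
    exact div_nonneg (mul_nonneg ha hD) (add_nonneg ha hb)
  · rw [div_le_div_iff₀ (by linarith) (by linarith)]
    nlinarith [mul_le_mul_of_nonneg_right hle (mul_nonneg hb hD)]

lemma antitoneOn_div_mul {c σ : ℝ} (hc : 0 ≤ c) (hσ : 0 < σ) :
    AntitoneOn (fun x : ℝ => c / (x * σ)) (Ioi 0) :=
  fun _ hx _ _ hle =>
    div_le_div_of_nonneg_left hc (mul_pos hx hσ) (mul_le_mul_of_nonneg_right hle hσ.le)

lemma antitoneOn_div_sub {k m : ℝ} (hk : 0 ≤ k) :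
    AntitoneOn (fun x : ℝ => k / (x - m)) (Ioi m) :=
  fun _ hx _ _ hle => div_le_div_of_nonneg_left hk (sub_pos.mpr hx) (sub_le_sub_right hle m)

lemma monotone_sqrt_max_zero_sub (c : ℝ) : Monotone fun t : ℝ => √(max 0 (t - c)) :=
  fun _ _ hle => Real.sqrt_le_sqrt (max_le_max le_rfl (sub_le_sub_right hle c))

theorem tapr_placement_antitone_in_PF_general (D HA β Pt σ2 σF2 Na Np HP : ℝ)
    (hD : 0 < D) (hβ : 0 < β) (hPt : 0 < Pt) (hσ2 : 0 < σ2)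
    (hσF2 : 0 < σF2) (hNa : 0 < Na) :
    ∀ PF PF' : ℝ, Na * σF2 < PF → PF ≤ PF' →
      max ((Pt * σ2 / (PF' * σF2)) * D / (Pt * σ2 / (PF' * σF2) + β * Np ^ 2 / HP ^ 2))
        (Real.sqrt (max 0 (Na * β * Pt / (PF' - Na * σF2) - HA ^ 2))) ≤
      max ((Pt * σ2 / (PF * σF2)) * D / (Pt * σ2 / (PF * σF2) + β * Np ^ 2 / HP ^ 2))
        (Real.sqrt (max 0 (Na * β * Pt / (PF - Na * σF2) - HA ^ 2))) := by
  intro PF PF' hPF hle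
  have hPFpos : 0 < PF := (mul_pos hNa hσF2).trans hPF
  have hPF'pos : 0 < PF' := hPFpos.trans_le hle
  apply max_le_max
  · have hamp : Pt * σ2 / (PF' * σF2) ≤ Pt * σ2 / (PF * σF2) :=
      antitoneOn_div_mul (by positivity) hσF2 hPFpos hPF'pos hle
    exact monotoneOn_mul_div_add (by positivity) hD.le
      (by positivity : (0 : ℝ) ≤ Pt * σ2 / (PF' * σF2))
      (by positivity : (0 : ℝ) ≤ Pt * σ2 / (PF * σF2)) hamp
  · exact (monotone_sqrt_max_zero_sub (HA ^ 2)).comp_antitoneOn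
      (antitoneOn_div_sub (by positivity)) hPF (hPF.trans_le hle) hle

/-- Lemma 1 of the paper, `P_F` part (TAPR scheme): the optimized Tx–AIRS
horizontal distance `x^a(P_F) = max (a(P_F)D/(a(P_F)+b)) (x_a(P_F))` is
non-increasing in the AIRS amplification power budget `P_F` on `(N_aσ_F², ∞)`. -/
theorem tapr_placement_antitone_in_PF (D HA β Pt σ2 σF2 Na Np HP : ℝ)
    (hD : 0 < D) (hHA : 0 < HA) (hβ : 0 < β) (hPt : 0 < Pt) (hσ2 : 0 < σ2)
    (hσF2 : 0 < σF2) (hNa : 0 < Na) (hNp : 0 < Np) (hHP : 0 < HP) :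
    ∀ PF PF' : ℝ, Na * σF2 < PF → PF ≤ PF' →
      max ((Pt * σ2 / (PF' * σF2)) * D / (Pt * σ2 / (PF' * σF2) + β * Np ^ 2 / HP ^ 2))
        (Real.sqrt (max 0 (Na * β * Pt / (PF' - Na * σF2) - HA ^ 2))) ≤
      max ((Pt * σ2 / (PF * σF2)) * D / (Pt * σ2 / (PF * σF2) + β * Np ^ 2 / HP ^ 2))
        (Real.sqrt (max 0 (Na * β * Pt / (PF - Na * σF2) - HA ^ 2))) :=
  tapr_placement_antitone_in_PF_general D HA β Pt σ2 σF2 Na Np HP hD hβ hPt hσ2 hσF2 hNa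
end

section
/- Let D, H_A, H_P, β, P_t, P_F, σ², σ_F², N_a be positive reals with P_F > N_a σ_F², and define a = P_t σ²/(P_F σ_F²), b(N_p) = β N_p²/H_P², x_b(N_p) = √(max{0, N_a N_p² β² P_t/((P_F − N_a σ_F²) H_P²) − (H_P − H_A)²}), and x^b(N_p) = max{a·b(N_p)·D/(a·b(N_p) + 1), x_b(N_p)}. Then N_p ↦ a·b(N_p)·D/(a·b(N_p) + 1) is strictly increasing on (0, ∞), N_p ↦ x_b(N_p) is non-decreasing on (0, ∞), and consequently x^b is non-decreasing in N_p: for all 0 < N_p ≤ N_p', x^b(N_p) ≤ x^b(N_p'). -/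
/-! Both `x^b` candidates depend on `N_p` only through `N_p²`, with nonnegative coefficients:
the unconstrained optimizer is `t ↦ t D / (t + 1)`, increasing for `t > -1`, evaluated at
`t = a b(N_p) = (a β / H_P²) N_p²`, and the constraint boundary `x_b` is `√(max 0 (c N_p² - k))`
with `c ≥ 0` because `P_F > N_a σ_F²`. A maximum of two monotone functions is monotone. -/

open Set

lemma strictMonoOn_mul_div_add_one {D : ℝ} (hD : 0 < D) :
    StrictMonoOn (fun t : ℝ => t * D / (t + 1)) (Ioi (-1)) := by
  intro t ht s hs hts
  have ht1 : 0 < t + 1 := by linarith [mem_Ioi.1 ht]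
  have hs1 : 0 < s + 1 := by linarith [mem_Ioi.1 hs]
  show t * D / (t + 1) < s * D / (s + 1)
  rw [div_lt_div_iff₀ ht1 hs1]
  nlinarith

lemma strictMonoOn_const_mul_sq {c : ℝ} (hc : 0 < c) :
    StrictMonoOn (fun x : ℝ => c * x ^ 2) (Ici 0) :=
  fun _ hx _ _ hxy => mul_lt_mul_of_pos_left (pow_lt_pow_left₀ hxy hx two_ne_zero) hc

lemma monotoneOn_sqrt_max_zero_const_mul_sq_sub {c : ℝ} (hc : 0 ≤ c) (k : ℝ) :
    MonotoneOn (fun x : ℝ => √(max 0 (c * x ^ 2 - k))) (Ici 0) :=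
  fun _ hx _ _ hxy => Real.sqrt_le_sqrt <| max_le_max le_rfl <|
    sub_le_sub_right (mul_le_mul_of_nonneg_left (pow_le_pow_left₀ hx hxy 2) hc) k

lemma strictMonoOn_const_mul_sq_mul_div_add_one {c D : ℝ} (hc : 0 < c) (hD : 0 < D) :
    StrictMonoOn (fun x : ℝ => c * x ^ 2 * D / (c * x ^ 2 + 1)) (Ici 0) :=
  (strictMonoOn_mul_div_add_one hD).comp (strictMonoOn_const_mul_sq hc)
    fun x _ => mem_Ioi.2 (by nlinarith [sq_nonneg x])

theorem tpar_placement_monotone_in_Np_general (D HA HP β Pt PF σ2 σF2 Na : ℝ)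
    (hD : 0 < D) (hHP : 0 < HP) (hβ : 0 < β) (hPt : 0 < Pt)
    (hPF : 0 < PF) (hσ2 : 0 < σ2) (hσF2 : 0 < σF2) (hNa : 0 < Na)
    (hbudget : PF > Na * σF2)
    (a : ℝ) (ha : a = Pt * σ2 / (PF * σF2)) :
    (∀ Np Np' : ℝ, 0 < Np → Np < Np' →
      a * (β * Np ^ 2 / HP ^ 2) * D / (a * (β * Np ^ 2 / HP ^ 2) + 1) <
        a * (β * Np' ^ 2 / HP ^ 2) * D / (a * (β * Np' ^ 2 / HP ^ 2) + 1)) ∧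
    (∀ Np Np' : ℝ, 0 < Np → Np ≤ Np' →
      Real.sqrt (max 0
          (Na * Np ^ 2 * β ^ 2 * Pt / ((PF - Na * σF2) * HP ^ 2) - (HP - HA) ^ 2)) ≤
        Real.sqrt (max 0
          (Na * Np' ^ 2 * β ^ 2 * Pt / ((PF - Na * σF2) * HP ^ 2) - (HP - HA) ^ 2))) ∧
    (∀ Np Np' : ℝ, 0 < Np → Np ≤ Np' →
      max (a * (β * Np ^ 2 / HP ^ 2) * D / (a * (β * Np ^ 2 / HP ^ 2) + 1))
          (Real.sqrt (max 0
            (Na * Np ^ 2 * β ^ 2 * Pt / ((PF - Na * σF2) * HP ^ 2) - (HP - HA) ^ 2))) ≤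
        max (a * (β * Np' ^ 2 / HP ^ 2) * D / (a * (β * Np' ^ 2 / HP ^ 2) + 1))
          (Real.sqrt (max 0
            (Na * Np' ^ 2 * β ^ 2 * Pt / ((PF - Na * σF2) * HP ^ 2) - (HP - HA) ^ 2)))) := by
  have hab : ∀ Np : ℝ, a * (β * Np ^ 2 / HP ^ 2) = a * β / HP ^ 2 * Np ^ 2 := fun _ => by ring
  have hxb : ∀ Np : ℝ, Na * Np ^ 2 * β ^ 2 * Pt / ((PF - Na * σF2) * HP ^ 2) =
      Na * β ^ 2 * Pt / ((PF - Na * σF2) * HP ^ 2) * Np ^ 2 := fun _ => by ring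
  simp only [hab, hxb]
  have hopt := strictMonoOn_const_mul_sq_mul_div_add_one
    (show 0 < a * β / HP ^ 2 by rw [ha]; positivity) hD
  have hbound := monotoneOn_sqrt_max_zero_const_mul_sq_sub
    (show 0 ≤ Na * β ^ 2 * Pt / ((PF - Na * σF2) * HP ^ 2) by
      have : 0 < PF - Na * σF2 := sub_pos.2 hbudget
      positivity) ((HP - HA) ^ 2)
  refine ⟨fun Np Np' hNp hlt => hopt hNp.le (hNp.le.trans hlt.le) hlt,
    fun Np Np' hNp hle => hbound hNp.le (hNp.le.trans hle) hle,
    fun Np Np' hNp hle => hopt.monotoneOn.max hbound hNp.le (hNp.le.trans hle) hle⟩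

/-- Lemma 2 of the paper, `N_p` part (TPAR scheme): the unconstrained optimizer
`N_p ↦ a·b(N_p)·D/(a·b(N_p)+1)` is strictly increasing on `(0, ∞)`, the
constraint boundary `N_p ↦ x_b(N_p)` is non-decreasing on `(0, ∞)`, and hence
the optimized Tx–AIRS distance `x^b(N_p)` is non-decreasing in `N_p`. -/
theorem tpar_placement_monotone_in_Np (D HA HP β Pt PF σ2 σF2 Na : ℝ)
    (hD : 0 < D) (hHA : 0 < HA) (hHP : 0 < HP) (hβ : 0 < β) (hPt : 0 < Pt)
    (hPF : 0 < PF) (hσ2 : 0 < σ2) (hσF2 : 0 < σF2) (hNa : 0 < Na)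
    (hbudget : PF > Na * σF2)
    (a : ℝ) (ha : a = Pt * σ2 / (PF * σF2)) :
    (∀ Np Np' : ℝ, 0 < Np → Np < Np' →
      a * (β * Np ^ 2 / HP ^ 2) * D / (a * (β * Np ^ 2 / HP ^ 2) + 1) <
        a * (β * Np' ^ 2 / HP ^ 2) * D / (a * (β * Np' ^ 2 / HP ^ 2) + 1)) ∧
    (∀ Np Np' : ℝ, 0 < Np → Np ≤ Np' →
      Real.sqrt (max 0
          (Na * Np ^ 2 * β ^ 2 * Pt / ((PF - Na * σF2) * HP ^ 2) - (HP - HA) ^ 2)) ≤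
        Real.sqrt (max 0
          (Na * Np' ^ 2 * β ^ 2 * Pt / ((PF - Na * σF2) * HP ^ 2) - (HP - HA) ^ 2))) ∧
    (∀ Np Np' : ℝ, 0 < Np → Np ≤ Np' →
      max (a * (β * Np ^ 2 / HP ^ 2) * D / (a * (β * Np ^ 2 / HP ^ 2) + 1))
          (Real.sqrt (max 0
            (Na * Np ^ 2 * β ^ 2 * Pt / ((PF - Na * σF2) * HP ^ 2) - (HP - HA) ^ 2))) ≤
        max (a * (β * Np' ^ 2 / HP ^ 2) * D / (a * (β * Np' ^ 2 / HP ^ 2) + 1))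
          (Real.sqrt (max 0
            (Na * Np' ^ 2 * β ^ 2 * Pt / ((PF - Na * σF2) * HP ^ 2) - (HP - HA) ^ 2)))) :=
  tpar_placement_monotone_in_Np_general D HA HP β Pt PF σ2 σF2 Na hD hHP hβ hPt hPF hσ2 hσF2 hNa
    hbudget a ha
end
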